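/- Let 1 → {G_n} → {H_n} → {K_n} → 1 be a short exact sequence of inverse systems of (not necessarily abelian) groups indexed by the natural numbers. Then there is a natural exact sequence of pointed sets 1 → lim G_n → lim H_n → lim K_n → lim¹ G_n → lim¹ H_n → lim¹ K_n → *. -/
import Mathlib

/-! ### `lim` and `lim¹` of a tower of (not necessarily abelian) groups -/

section LimTower

variable {G H : ℕ → Type} [∀ n, Group (G n)] [∀ n, Group (H n)]

/-- The inverse limit of a tower of groups `⋯ → G (n+1) → G n → ⋯ → G 0`,
as a subgroup of the product. -/
def towerLim (d : ∀ n, G (n + 1) →* G n) : Subgroup (∀ n, G n) where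
  carrier := {x | ∀ n, d n (x (n + 1)) = x n}
  one_mem' := by intro n; simp
  mul_mem' := by intro a b ha hb n; simp [ha n, hb n]
  inv_mem' := by intro a ha n; simp [ha n]

/-- The `lim¹` setoid: the orbit equivalence relation of the action
`(γ • x) n = γ n * x n * (d n (γ (n+1)))⁻¹` of `∏ G n` on itself. -/
def lim1Setoid (d : ∀ n, G (n + 1) →* G n) : Setoid (∀ n, G n) where
  r x y := ∃ γ : ∀ n, G n, ∀ n, y n = γ n * x n * (d n (γ (n + 1)))⁻¹
  iseqv := by
    constructor
    · exact fun x => ⟨1, fun n => by simp⟩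
    · rintro x y ⟨γ, h⟩
      refine ⟨fun n => (γ n)⁻¹, fun n => ?_⟩
      rw [h n, map_inv]
      group
    · rintro x y z ⟨γ, h⟩ ⟨δ, h'⟩
      refine ⟨fun n => δ n * γ n, fun n => ?_⟩
      rw [h' n, h n, map_mul]
      group

/-- `lim¹` of a tower of groups: the orbit space of the action
`(γ • x) n = γ n * x n * (d n (γ (n+1)))⁻¹` of `∏ G n` on itself. It is a pointed set,
whose base point is the orbit of the identity. -/
def lim1 (d : ∀ n, G (n + 1) →* G n) : Type :=
  Quotient (lim1Setoid d)

/-- The base point of `lim¹`. -/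
def lim1.base (d : ∀ n, G (n + 1) →* G n) : lim1 d :=
  Quotient.mk _ 1

/-- The map induced on inverse limits by a map of towers. -/
def towerLimMap {dG : ∀ n, G (n + 1) →* G n} {dH : ∀ n, H (n + 1) →* H n}
    (τ : ∀ n, G n →* H n) (hτ : ∀ n g, dH n (τ (n + 1) g) = τ n (dG n g)) :
    towerLim dG → towerLim dH :=
  fun x => ⟨fun n => τ n (x.1 n), fun n => by rw [hτ n, x.2 n]⟩

/-- The map induced on `lim¹` by a map of towers. -/
def lim1Map {dG : ∀ n, G (n + 1) →* G n} {dH : ∀ n, H (n + 1) →* H n}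
    (τ : ∀ n, G n →* H n) (hτ : ∀ n g, dH n (τ (n + 1) g) = τ n (dG n g)) :
    lim1 dG → lim1 dH :=
  Quotient.map (fun x n => τ n (x n)) (by
    rintro x y ⟨γ, h⟩
    refine ⟨fun n => τ n (γ n), fun n => ?_⟩
    show τ n (y n) = _
    rw [h n]
    simp [hτ n])

end LimTower

section SixTermAux

variable {G H K : ℕ → Type} [∀ n, Group (G n)] [∀ n, Group (H n)] [∀ n, Group (K n)]
  {dG : ∀ n, G (n + 1) →* G n} {dH : ∀ n, H (n + 1) →* H n} {dK : ∀ n, K (n + 1) →* K n}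
  {φ : ∀ n, G n →* H n} {ψ : ∀ n, H n →* K n}

theorem sixTerm.psi_phi (hexact : ∀ n, MonoidHom.range (φ n) = MonoidHom.ker (ψ n))
    (n : ℕ) (g : G n) : ψ n (φ n g) = 1 := by
  have : φ n g ∈ MonoidHom.ker (ψ n) := (hexact n) ▸ ⟨g, rfl⟩
  exact this

theorem sixTerm.exists_pre (hexact : ∀ n, MonoidHom.range (φ n) = MonoidHom.ker (ψ n))
    (n : ℕ) (h : H n) (hh : ψ n h = 1) : ∃ g, φ n g = h := by
  have : h ∈ MonoidHom.range (φ n) := by rw [hexact n, MonoidHom.mem_ker]; exact hh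
  exact MonoidHom.mem_range.mp this

theorem sixTerm.exists_lift
    (hψd : ∀ n h, dK n (ψ (n + 1) h) = ψ n (dH n h))
    (hψsurj : ∀ n, Function.Surjective (ψ n))
    (hexact : ∀ n, MonoidHom.range (φ n) = MonoidHom.ker (ψ n))
    (k : towerLim dK) :
    ∃ (g : ∀ n, G n) (h : ∀ n, H n),
      (∀ n, ψ n (h n) = k.1 n) ∧ ∀ n, φ n (g n) = (h n)⁻¹ * dH n (h (n + 1)) := by
  choose h hh using fun n => hψsurj n (k.1 n)
  have key : ∀ n, ψ n ((h n)⁻¹ * dH n (h (n + 1))) = 1 := by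
    intro n
    rw [map_mul, map_inv, ← hψd n, hh, hh, k.2 n, inv_mul_cancel]
  choose g hg using fun n => sixTerm.exists_pre hexact n _ (key n)
  exact ⟨g, h, hh, hg⟩

/-- The connecting map `δ : lim Kₙ → lim¹ Gₙ`. -/
noncomputable def sixTerm.delta (dG : ∀ n, G (n + 1) →* G n)
    (hψd : ∀ n h, dK n (ψ (n + 1) h) = ψ n (dH n h))
    (hψsurj : ∀ n, Function.Surjective (ψ n))
    (hexact : ∀ n, MonoidHom.range (φ n) = MonoidHom.ker (ψ n))
    (k : towerLim dK) : lim1 dG :=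
  Quotient.mk (lim1Setoid dG) (sixTerm.exists_lift hψd hψsurj hexact k).choose

theorem sixTerm.delta_spec
    (hφd : ∀ n g, dH n (φ (n + 1) g) = φ n (dG n g))
    (hψd : ∀ n h, dK n (ψ (n + 1) h) = ψ n (dH n h))
    (hφinj : ∀ n, Function.Injective (φ n))
    (hψsurj : ∀ n, Function.Surjective (ψ n))
    (hexact : ∀ n, MonoidHom.range (φ n) = MonoidHom.ker (ψ n))
    (k : towerLim dK) (h : ∀ n, H n) (g : ∀ n, G n)
    (hh : ∀ n, ψ n (h n) = k.1 n)
    (hg : ∀ n, φ n (g n) = (h n)⁻¹ * dH n (h (n + 1))) :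
    sixTerm.delta dG hψd hψsurj hexact k = Quotient.mk (lim1Setoid dG) g := by
  obtain ⟨h₀, hh₀, hg₀⟩ := (sixTerm.exists_lift hψd hψsurj hexact k).choose_spec
  set g₀ := (sixTerm.exists_lift hψd hψsurj hexact k).choose with hg₀def
  show Quotient.mk (lim1Setoid dG) g₀ = Quotient.mk (lim1Setoid dG) g
  have hker : ∀ n, ψ n ((h₀ n)⁻¹ * h n) = 1 := fun n => by
    rw [map_mul, map_inv, hh₀ n, hh n, inv_mul_cancel]
  choose a ha using fun n => sixTerm.exists_pre hexact n _ (hker n)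
  apply Quotient.sound
  refine ⟨fun n => (a n)⁻¹, fun n => ?_⟩
  apply hφinj n
  have e1 : φ n ((a n)⁻¹ * g₀ n * (dG n ((a (n + 1))⁻¹))⁻¹)
      = (φ n (a n))⁻¹ * φ n (g₀ n) * dH n (φ (n + 1) (a (n + 1))) := by
    simp only [map_mul, map_inv, inv_inv, ← hφd n]
  rw [hg n, e1, ha n, ha (n + 1), hg₀ n, map_mul, map_inv]
  group

theorem sixTerm.delta_def (dG : ∀ n, G (n + 1) →* G n)
    (hψd : ∀ n h, dK n (ψ (n + 1) h) = ψ n (dH n h))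
    (hψsurj : ∀ n, Function.Surjective (ψ n))
    (hexact : ∀ n, MonoidHom.range (φ n) = MonoidHom.ker (ψ n))
    (k : towerLim dK) :
    ∃ (g : ∀ n, G n) (h : ∀ n, H n), (∀ n, ψ n (h n) = k.1 n) ∧
      (∀ n, φ n (g n) = (h n)⁻¹ * dH n (h (n + 1))) ∧
      sixTerm.delta dG hψd hψsurj hexact k = Quotient.mk (lim1Setoid dG) g := by
  obtain ⟨h, hh, hg⟩ := (sixTerm.exists_lift hψd hψsurj hexact k).choose_spec
  exact ⟨_, h, hh, hg, rfl⟩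

end SixTermAux

/-!
STATEMENT 4: the six-term exact sequence
`1 → lim Gₙ → lim Hₙ → lim Kₙ → lim¹ Gₙ → lim¹ Hₙ → lim¹ Kₙ → *`
of pointed sets associated with a short exact sequence of towers of groups.
-/
theorem lim_lim1_six_term_exact_sequence
    {G H K : ℕ → Type} [∀ n, Group (G n)] [∀ n, Group (H n)] [∀ n, Group (K n)]
    (dG : ∀ n, G (n + 1) →* G n) (dH : ∀ n, H (n + 1) →* H n) (dK : ∀ n, K (n + 1) →* K n)
    (φ : ∀ n, G n →* H n) (ψ : ∀ n, H n →* K n)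
    -- `φ` and `ψ` are maps of towers
    (hφd : ∀ n g, dH n (φ (n + 1) g) = φ n (dG n g))
    (hψd : ∀ n h, dK n (ψ (n + 1) h) = ψ n (dH n h))
    -- `1 → Gₙ → Hₙ → Kₙ → 1` is exact for every `n`
    (hφinj : ∀ n, Function.Injective (φ n))
    (hψsurj : ∀ n, Function.Surjective (ψ n))
    (hexact : ∀ n, MonoidHom.range (φ n) = MonoidHom.ker (ψ n)) :
    -- there is a connecting map `δ : lim Kₙ → lim¹ Gₙ` of pointed sets making the six-term
    -- sequence exact (exactness at `lim Gₙ` being injectivity, and exactness at `lim¹ Kₙ`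
    -- being surjectivity)
    ∃ δ : towerLim dK → lim1 dG,
      δ 1 = lim1.base dG ∧
      Function.Injective (towerLimMap φ hφd) ∧
      Set.range (towerLimMap φ hφd) = {x | towerLimMap ψ hψd x = 1} ∧
      Set.range (towerLimMap ψ hψd) = δ ⁻¹' {lim1.base dG} ∧
      Set.range δ = lim1Map φ hφd ⁻¹' {lim1.base dH} ∧
      Set.range (lim1Map φ hφd) = lim1Map ψ hψd ⁻¹' {lim1.base dK} ∧
      Function.Surjective (lim1Map ψ hψd) := by
  classical
  refine ⟨sixTerm.delta dG hψd hψsurj hexact, ?_, ?_, ?_, ?_, ?_, ?_, ?_⟩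
  · -- δ 1 = base
    have h1 := sixTerm.delta_spec hφd hψd hφinj hψsurj hexact 1 1 1
      (fun n => by simp) (fun n => by simp)
    simpa [lim1.base] using h1
  · -- injectivity of φ*
    intro x y hxy
    apply Subtype.ext; funext n
    exact hφinj n (congrFun (congrArg Subtype.val hxy) n)
  · -- exactness at lim H
    ext x
    simp only [Set.mem_range, Set.mem_setOf_eq]
    constructor
    · rintro ⟨g, rfl⟩
      apply Subtype.ext; funext n
      exact sixTerm.psi_phi hexact n (g.1 n)
    · intro hx1
      have hx : ∀ n, ψ n (x.1 n) = 1 := fun n => congrFun (congrArg Subtype.val hx1) n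
      choose g hgx using fun n => sixTerm.exists_pre hexact n _ (hx n)
      refine ⟨⟨g, fun n => ?_⟩, Subtype.ext (funext fun n => hgx n)⟩
      apply hφinj n
      rw [← hφd n, hgx (n + 1), x.2 n, hgx n]
  · -- exactness at lim K
    ext k
    simp only [Set.mem_range, Set.mem_preimage, Set.mem_singleton_iff]
    constructor
    · rintro ⟨x, rfl⟩
      have h1 := sixTerm.delta_spec hφd hψd hφinj hψsurj hexact
        (towerLimMap ψ hψd x) x.1 1 (fun n => rfl)
        (fun n => by rw [Pi.one_apply, map_one, x.2 n, inv_mul_cancel])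
      simpa [lim1.base] using h1
    · intro hk
      obtain ⟨g₀, h₀, hh₀, hg₀, hδ⟩ := sixTerm.delta_def dG hψd hψsurj hexact k
      rw [hδ] at hk
      obtain ⟨γ, hγ⟩ := Quotient.exact hk
      have hrel : ∀ n, g₀ n = (γ n)⁻¹ * dG n (γ (n + 1)) := by
        intro n
        have h2 := hγ n
        simp only [Pi.one_apply] at h2
        rw [eq_comm, mul_inv_eq_one] at h2
        rw [← h2]; group
      refine ⟨⟨fun n => h₀ n * (φ n (γ n))⁻¹, fun n => ?_⟩, Subtype.ext (funext fun n => ?_)⟩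
      · show dH n (h₀ (n + 1) * (φ (n + 1) (γ (n + 1)))⁻¹) = h₀ n * (φ n (γ n))⁻¹
        rw [map_mul, map_inv, hφd n]
        have hd : dH n (h₀ (n + 1)) = h₀ n * φ n (g₀ n) := by rw [hg₀ n]; group
        rw [hd, hrel n, map_mul, map_inv]
        group
      · show ψ n (h₀ n * (φ n (γ n))⁻¹) = k.1 n
        rw [map_mul, map_inv, sixTerm.psi_phi hexact, hh₀ n]
        simp
  · -- exactness at lim¹ G
    ext q
    simp only [Set.mem_range, Set.mem_preimage, Set.mem_singleton_iff]
    constructor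
    · rintro ⟨k, rfl⟩
      obtain ⟨g₀, h₀, hh₀, hg₀, hδ⟩ := sixTerm.delta_def dG hψd hψsurj hexact k
      rw [hδ]
      show lim1Map φ hφd (Quotient.mk _ g₀) = lim1.base dH
      rw [lim1Map, Quotient.map_mk]
      apply Quotient.sound
      refine ⟨h₀, fun n => ?_⟩
      show (1 : H n) = h₀ n * (φ n (g₀ n)) * (dH n (h₀ (n + 1)))⁻¹
      rw [hg₀ n]
      group
    · intro hq
      obtain ⟨g, rfl⟩ := Quotient.exists_rep q
      rw [lim1Map, Quotient.map_mk] at hq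
      obtain ⟨η, hη⟩ := Quotient.exact hq
      have hη' : ∀ n, dH n (η (n + 1)) = η n * φ n (g n) := by
        intro n
        have h2 := hη n
        simp only [Pi.one_apply] at h2
        rw [eq_comm, mul_inv_eq_one] at h2
        exact h2.symm
      have hkmem : ∀ n, dK n (ψ (n + 1) (η (n + 1))) = ψ n (η n) := by
        intro n
        rw [hψd n, hη' n, map_mul, sixTerm.psi_phi hexact, mul_one]
      refine ⟨⟨fun n => ψ n (η n), hkmem⟩, ?_⟩
      exact sixTerm.delta_spec hφd hψd hφinj hψsurj hexact _ η g
        (fun n => rfl) (fun n => by rw [hη' n]; group)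
  · -- exactness at lim¹ H
    ext q
    simp only [Set.mem_range, Set.mem_preimage, Set.mem_singleton_iff]
    constructor
    · rintro ⟨p, rfl⟩
      obtain ⟨g, rfl⟩ := Quotient.exists_rep p
      show lim1Map ψ hψd (lim1Map φ hφd (Quotient.mk _ g)) = lim1.base dK
      rw [lim1Map, lim1Map, Quotient.map_mk, Quotient.map_mk]
      have h1 : (fun n => ψ n (φ n (g n))) = (1 : ∀ n, K n) :=
        funext fun n => sixTerm.psi_phi hexact n (g n)
      rw [h1]; rfl
    · intro hq
      obtain ⟨x, rfl⟩ := Quotient.exists_rep q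
      rw [lim1Map, Quotient.map_mk] at hq
      obtain ⟨κ, hκ⟩ := Quotient.exact hq
      choose η hη using fun n => hψsurj n (κ n)
      have hker : ∀ n, ψ n (η n * x n * (dH n (η (n + 1)))⁻¹) = 1 := by
        intro n
        rw [map_mul, map_mul, map_inv, ← hψd n, hη, hη]
        have h2 := hκ n
        simp only [Pi.one_apply] at h2
        exact h2.symm
      choose g hgy using fun n => sixTerm.exists_pre hexact n _ (hker n)
      refine ⟨Quotient.mk _ g, ?_⟩
      rw [lim1Map, Quotient.map_mk]
      have hfg : (fun n => φ n (g n)) = fun n => η n * x n * (dH n (η (n + 1)))⁻¹ :=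
        funext hgy
      have hxy : Quotient.mk (lim1Setoid dH) x
          = Quotient.mk (lim1Setoid dH) (fun n => η n * x n * (dH n (η (n + 1)))⁻¹) :=
        Quotient.sound ⟨η, fun n => rfl⟩
      rw [hfg]
      exact hxy.symm
  · -- surjectivity of lim¹ ψ
    intro q
    obtain ⟨k, rfl⟩ := Quotient.exists_rep q
    choose h hh using fun n => hψsurj n (k n)
    refine ⟨Quotient.mk _ h, ?_⟩
    rw [lim1Map, Quotient.map_mk]
    exact congrArg _ (funext hh)
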